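/- Roe's flux-difference property for the Euler equations (the property required of the averaged Jacobian used by the paper's Riemann-solver-based FCT): Let γ ∈ ℝ and let U_L = (ρ_L, m_L, E_L) and U_R = (ρ_R, m_R, E_R) be states with ρ_L > 0 and ρ_R > 0. Set D = (ρ_R/ρ_L)^{1/2}, û = (D·u_R + u_L)/(D + 1), and Ĥ = (D·H_R + H_L)/(D + 1), where u_{L/R} and H_{L/R} are the velocity and total enthalpy of U_{L/R}. Then F(U_R) − F(U_L) = A(û, Ĥ) · (U_R − U_L). -/
import Mathlib


open Matrix

/-- The Euler flux `F(U) = (m, m²/ρ + p, m(E + p)/ρ)` of a state `U = (ρ, m, E)`,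
with ideal-gas pressure `p = (γ−1)(E − m²/(2ρ))`. -/
noncomputable def eulerFlux (γ : ℝ) (U : Fin 3 → ℝ) : Fin 3 → ℝ :=
  ![U 1,
    (U 1) ^ 2 / U 0 + (γ - 1) * (U 2 - (U 1) ^ 2 / (2 * U 0)),
    U 1 * (U 2 + (γ - 1) * (U 2 - (U 1) ^ 2 / (2 * U 0))) / U 0]

/-- The Euler flux Jacobian evaluated at velocity `u` and total enthalpy `H`. -/
noncomputable def eulerJacobian (γ u H : ℝ) : Matrix (Fin 3) (Fin 3) ℝ :=
  !![0, 1, 0;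
     ((γ - 3) / 2) * u ^ 2, (3 - γ) * u, γ - 1;
     ((γ - 1) / 2) * u ^ 3 - u * H, H - (γ - 1) * u ^ 2, γ * u]

/-- Roe's flux-difference property for the Euler equations: with the Roe averages
`D = √(ρ_R/ρ_L)`, `û = (D·u_R + u_L)/(D + 1)`, `Ĥ = (D·H_R + H_L)/(D + 1)`, the flux
difference satisfies `F(U_R) − F(U_L) = A(û, Ĥ)·(U_R − U_L)`. -/
theorem roe_flux_difference (γ ρL mL EL ρR mR ER : ℝ) (hρL : 0 < ρL) (hρR : 0 < ρR) :
    let uL := mL / ρL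
    let uR := mR / ρR
    let pL := (γ - 1) * (EL - mL ^ 2 / (2 * ρL))
    let pR := (γ - 1) * (ER - mR ^ 2 / (2 * ρR))
    let HL := (EL + pL) / ρL
    let HR := (ER + pR) / ρR
    let D := Real.sqrt (ρR / ρL)
    let uhat := (D * uR + uL) / (D + 1)
    let Hhat := (D * HR + HL) / (D + 1)
    eulerFlux γ ![ρR, mR, ER] - eulerFlux γ ![ρL, mL, EL]
      = eulerJacobian γ uhat Hhat *ᵥ (![ρR, mR, ER] - ![ρL, mL, EL]) := by
  have ha : 0 < Real.sqrt ρL := Real.sqrt_pos.mpr hρL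
  have hb : 0 < Real.sqrt ρR := Real.sqrt_pos.mpr hρR
  have hL : ρL = (Real.sqrt ρL) ^ 2 := (Real.sq_sqrt hρL.le).symm
  have hR : ρR = (Real.sqrt ρR) ^ 2 := (Real.sq_sqrt hρR.le).symm
  set a := Real.sqrt ρL with hadef
  set b := Real.sqrt ρR with hbdef
  have hD : Real.sqrt (ρR / ρL) = b / a := by
    rw [Real.sqrt_div hρR.le, ← hadef, ← hbdef]
  intro uL uR pL pR HL HR D uhat Hhat
  have hab : (0:ℝ) < a + b := by linarith
  simp only [uhat, Hhat, D, uL, uR, pL, pR, HL, HR, hD]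
  rw [hL, hR]
  funext i
  fin_cases i <;>
    simp [eulerFlux, eulerJacobian, mulVec, dotProduct, Fin.sum_univ_succ] <;>
    field_simp <;>
    ring
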